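/- arXiv:2211.10577 — 4 statements merged into one kernel-verified Lean document; each statement's English description precedes it below -/
import Mathlib

section
/- A pointed polyhedron in R^d whose unique zero-dimensional face is the origin is closed under multiplication by nonnegative real scalars, i.e., it is a polyhedral cone. -/
/-!
STATEMENT 1: A pointed polyhedron in ℝ^d whose unique zero-dimensional face is the
origin is closed under multiplication by nonnegative real scalars, i.e. it is a
polyhedral cone.
-/

open scoped BigOperators

noncomputable section

/-- The standard inner product on `ℝ^d`. -/
def dotR {d : ℕ} (c x : Fin d → ℝ) : ℝ := ∑ i, c i * x i

/-- A polyhedron: an intersection of finitely many closed half-spaces in `ℝ^d`. -/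
def IsPolyhedron {d : ℕ} (P : Set (Fin d → ℝ)) : Prop :=
  ∃ (n : ℕ) (c : Fin n → Fin d → ℝ) (b : Fin n → ℝ),
    P = {x | ∀ i, dotR (c i) x ≤ b i}

/-- The face of `P` where the linear functional `⟨c, -⟩` attains its maximum over `P`. -/
def faceOf {d : ℕ} (c : Fin d → ℝ) (P : Set (Fin d → ℝ)) : Set (Fin d → ℝ) :=
  {x ∈ P | ∀ y ∈ P, dotR c y ≤ dotR c x}

/-- A (nonempty) face of the polyhedron `P`. -/
def IsFaceOfPoly {d : ℕ} (P F : Set (Fin d → ℝ)) : Prop :=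
  ∃ c : Fin d → ℝ, F = faceOf c P

lemma dotR_add {d : ℕ} (c x y : Fin d → ℝ) : dotR c (x + y) = dotR c x + dotR c y := by
  simp [dotR, mul_add, Finset.sum_add_distrib]

lemma dotR_sub {d : ℕ} (c x y : Fin d → ℝ) : dotR c (x - y) = dotR c x - dotR c y := by
  simp [dotR, mul_sub, Finset.sum_sub_distrib]

lemma dotR_smul {d : ℕ} (c : Fin d → ℝ) (t : ℝ) (x : Fin d → ℝ) :
    dotR c (t • x) = t * dotR c x := by
  simp [dotR, Finset.mul_sum, mul_left_comm]

lemma dotR_zero {d : ℕ} (c : Fin d → ℝ) : dotR c (0 : Fin d → ℝ) = 0 := by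
  simp [dotR]

lemma dotR_neg {d : ℕ} (c x : Fin d → ℝ) : dotR c (-x) = - dotR c x := by
  simp [dotR]

lemma dotR_sum_left {d n : ℕ} (J : Finset (Fin n)) (f : Fin n → Fin d → ℝ) (x : Fin d → ℝ) :
    dotR (∑ j ∈ J, f j) x = ∑ j ∈ J, dotR (f j) x := by
  simp only [dotR, Finset.sum_apply, Finset.sum_mul]
  exact Finset.sum_comm

theorem pointed_polyhedron_with_vertex_origin_is_cone
    {d : ℕ} (P : Set (Fin d → ℝ)) (hP : IsPolyhedron P)
    -- the origin is a zero-dimensional face of `P`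
    (h0 : IsFaceOfPoly P {0})
    -- and it is the unique zero-dimensional face of `P` (pointedness)
    (huniq : ∀ (F : Set (Fin d → ℝ)) (x : Fin d → ℝ),
      IsFaceOfPoly P F → F = {x} → F = ({0} : Set (Fin d → ℝ))) :
    ∀ (l : ℝ), 0 ≤ l → ∀ x ∈ P, l • x ∈ P := by
  classical
  obtain ⟨n, c, b, hPeq⟩ := hP
  obtain ⟨c₀, hc₀⟩ := h0
  have h0mem : (0 : Fin d → ℝ) ∈ faceOf c₀ P := by
    rw [← hc₀]; exact Set.mem_singleton _
  have h0P : (0 : Fin d → ℝ) ∈ P := h0mem.1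
  have hmax0 : ∀ y ∈ P, dotR c₀ y ≤ 0 := by
    intro y hy
    have := h0mem.2 y hy
    rwa [dotR_zero] at this
  have hb : ∀ i, 0 ≤ b i := by
    intro i
    have h := h0P
    rw [hPeq] at h
    have := h i
    rwa [dotR_zero] at this
  -- zero lineality
  have hstar : ∀ w : Fin d → ℝ, (∀ i, dotR (c i) w = 0) → w = 0 := by
    intro w hw
    have hwP : w ∈ P := by
      rw [hPeq]; intro i; rw [hw i]; exact hb i
    have hwnP : -w ∈ P := by
      rw [hPeq]; intro i; rw [dotR_neg, hw i]; simpa using hb i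
    have h1 : dotR c₀ w ≤ 0 := hmax0 w hwP
    have h2 : dotR c₀ (-w) ≤ 0 := hmax0 _ hwnP
    rw [dotR_neg] at h2
    have hweq : dotR c₀ w = 0 := le_antisymm h1 (by linarith)
    have hwf : w ∈ faceOf c₀ P :=
      ⟨hwP, fun y hy => by rw [hweq]; exact hmax0 y hy⟩
    rw [← hc₀] at hwf
    simpa using hwf
  -- tight index set
  set Jf : (Fin d → ℝ) → Finset (Fin n) :=
    fun z => Finset.univ.filter (fun j => dotR (c j) z = b j) with hJf
  have hmemJ : ∀ z j, j ∈ Jf z ↔ dotR (c j) z = b j := by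
    intro z j; simp [hJf]
  -- z maximizes ∑_{j ∈ Jf z} c j over P
  have hzmax : ∀ z ∈ P, ∀ y ∈ P,
      dotR (∑ j ∈ Jf z, c j) y ≤ dotR (∑ j ∈ Jf z, c j) z := by
    intro z hz y hy
    rw [dotR_sum_left, dotR_sum_left]
    apply Finset.sum_le_sum
    intro j hj
    rw [(hmemJ z j).mp hj]
    have h := hy; rw [hPeq] at h; exact h j
  -- a maximizer of this functional is tight on all of Jf z
  have htight : ∀ z ∈ P, ∀ y ∈ P,
      dotR (∑ j ∈ Jf z, c j) z ≤ dotR (∑ j ∈ Jf z, c j) y →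
      ∀ j ∈ Jf z, dotR (c j) y = b j := by
    intro z hz y hy hle
    rw [dotR_sum_left, dotR_sum_left] at hle
    have hsum0 : ∑ j ∈ Jf z, (b j - dotR (c j) y) = 0 := by
      have h1 : ∑ j ∈ Jf z, (b j - dotR (c j) y) ≤ 0 := by
        have : ∑ j ∈ Jf z, dotR (c j) z = ∑ j ∈ Jf z, b j :=
          Finset.sum_congr rfl (fun j hj => (hmemJ z j).mp hj)
        rw [Finset.sum_sub_distrib]
        linarith [hle, this]
      have h2 : 0 ≤ ∑ j ∈ Jf z, (b j - dotR (c j) y) := by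
        apply Finset.sum_nonneg
        intro j _
        have h := hy; rw [hPeq] at h
        linarith [h j]
      linarith
    intro j hj
    have := (Finset.sum_eq_zero_iff_of_nonneg (fun j _ => by
      have h := hy; rw [hPeq] at h; linarith [h j])).mp hsum0 j hj
    linarith
  -- if the face of z's tight functional is a singleton {z}, contradiction
  have hsing : ∀ z ∈ P, ∀ i : Fin n, dotR (c i) z = b i → 0 < b i →
      (∀ y ∈ faceOf (∑ j ∈ Jf z, c j) P, y = z) → False := by
    intro z hz i hi hbi hall
    have hzface : z ∈ faceOf (∑ j ∈ Jf z, c j) P := ⟨hz, hzmax z hz⟩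
    have hFeq : faceOf (∑ j ∈ Jf z, c j) P = {z} := by
      ext y
      constructor
      · intro hy; exact hall y hy
      · intro hy
        rw [Set.mem_singleton_iff] at hy
        rw [hy]; exact hzface
    have h00 : ({z} : Set (Fin d → ℝ)) = {0} := by
      rw [← hFeq]
      exact huniq _ z ⟨_, rfl⟩ hFeq
    have hz0 : z = 0 := by
      have : z ∈ ({0} : Set (Fin d → ℝ)) := by rw [← h00]; exact Set.mem_singleton _
      simpa using this
    rw [hz0, dotR_zero] at hi
    linarith
  -- main induction: no point of P can be tight on a constraint with b i > 0
  have key : ∀ k : ℕ, ∀ z ∈ P, ∀ i : Fin n, dotR (c i) z = b i → 0 < b i →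
      n ≤ (Jf z).card + k → False := by
    intro k
    induction k with
    | zero =>
      intro z hz i hi hbi hcard
      apply hsing z hz i hi hbi
      intro y hy
      have huniv : Jf z = Finset.univ := by
        apply Finset.eq_univ_of_card
        have h1 : (Jf z).card ≤ Fintype.card (Fin n) := Finset.card_le_univ _
        simp only [Fintype.card_fin] at h1 ⊢
        omega
      have hyt : ∀ j ∈ Jf z, dotR (c j) y = b j :=
        htight z hz y hy.1 (hy.2 z hz)
      have hw : ∀ j, dotR (c j) (y - z) = 0 := by
        intro j
        have hj : j ∈ Jf z := by rw [huniv]; exact Finset.mem_univ _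
        rw [dotR_sub, hyt j hj, (hmemJ z j).mp hj]; ring
      have := hstar _ hw
      exact sub_eq_zero.mp this
    | succ k ih =>
      intro z hz i hi hbi hcard
      by_cases hall : ∀ y ∈ faceOf (∑ j ∈ Jf z, c j) P, y = z
      · exact hsing z hz i hi hbi hall
      · push_neg at hall
        obtain ⟨u, hu, hune⟩ := hall
        have hut : ∀ j ∈ Jf z, dotR (c j) u = b j :=
          htight z hz u hu.1 (hu.2 z hz)
        have hwne : u - z ≠ 0 := sub_ne_zero.mpr hune
        have hwJ : ∀ j ∈ Jf z, dotR (c j) (u - z) = 0 := by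
          intro j hj
          rw [dotR_sub, hut j hj, (hmemJ z j).mp hj]; ring
        obtain ⟨j₀, hj₀⟩ : ∃ j, dotR (c j) (u - z) ≠ 0 := by
          by_contra h
          push_neg at h
          exact hwne (hstar _ h)
        obtain ⟨v, hvJ, jp, hjp⟩ : ∃ v : Fin d → ℝ,
            (∀ j ∈ Jf z, dotR (c j) v = 0) ∧ ∃ j, 0 < dotR (c j) v := by
          rcases lt_or_gt_of_ne hj₀ with h | h
          · exact ⟨-(u - z), fun j hj => by rw [dotR_neg, hwJ j hj]; ring,
              ⟨j₀, by rw [dotR_neg]; linarith⟩⟩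
          · exact ⟨u - z, hwJ, ⟨j₀, h⟩⟩
        set S : Finset (Fin n) := Finset.univ.filter (fun j => 0 < dotR (c j) v) with hS
        have hSne : S.Nonempty := ⟨jp, by simp [hS, hjp]⟩
        obtain ⟨m, hmS, hmin⟩ :=
          Finset.exists_min_image S (fun j => (b j - dotR (c j) z) / dotR (c j) v) hSne
        have hSv : ∀ j ∈ S, 0 < dotR (c j) v := by
          intro j hj; exact (Finset.mem_filter.mp hj).2
        have hSnotJ : ∀ j ∈ S, j ∉ Jf z := by
          intro j hjS hjJ
          have h1 := hvJ j hjJ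
          have h2 := hSv j hjS
          linarith
        have hslack : ∀ j ∈ S, dotR (c j) z < b j := by
          intro j hjS
          have h := hz; rw [hPeq] at h
          have hle := h j
          rcases lt_or_eq_of_le hle with h' | h'
          · exact h'
          · exact absurd ((hmemJ z j).mpr h') (hSnotJ j hjS)
        have hmv : 0 < dotR (c m) v := hSv m hmS
        set t : ℝ := (b m - dotR (c m) z) / dotR (c m) v with htdef
        have htpos : 0 < t := div_pos (by linarith [hslack m hmS]) hmv
        set z' := z + t • v with hz'def
        have hdz' : ∀ j, dotR (c j) z' = dotR (c j) z + t * dotR (c j) v := by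
          intro j; rw [hz'def, dotR_add, dotR_smul]
        have hz'P : z' ∈ P := by
          rw [hPeq]
          intro j
          rw [hdz' j]
          by_cases hjv : 0 < dotR (c j) v
          · have hjS : j ∈ S := Finset.mem_filter.mpr ⟨Finset.mem_univ _, hjv⟩
            have hmle := hmin j hjS
            have : t * dotR (c j) v ≤ b j - dotR (c j) z := by
              rw [← le_div_iff₀ hjv]
              exact hmle
            linarith
          · push_neg at hjv
            have h1 : t * dotR (c j) v ≤ 0 :=
              mul_nonpos_of_nonneg_of_nonpos htpos.le hjv
            have h := hz; rw [hPeq] at h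
            linarith [h j]
        have hmt : dotR (c m) z' = b m := by
          rw [hdz' m, htdef, div_mul_cancel₀ _ (ne_of_gt hmv)]
          ring
        have hsub : insert m (Jf z) ⊆ Jf z' := by
          intro j hj
          rcases Finset.mem_insert.mp hj with rfl | hjJ
          · exact (hmemJ z' j).mpr hmt
          · refine (hmemJ z' j).mpr ?_
            rw [hdz' j, hvJ j hjJ, (hmemJ z j).mp hjJ]; ring
        have hmnotJ : m ∉ Jf z := hSnotJ m hmS
        have hcard' : (Jf z).card + 1 ≤ (Jf z').card := by
          calc (Jf z).card + 1 = (insert m (Jf z)).card :=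
                (Finset.card_insert_of_notMem hmnotJ).symm
            _ ≤ (Jf z').card := Finset.card_le_card hsub
        have hiJ : i ∈ Jf z := (hmemJ z i).mpr hi
        have hiz' : dotR (c i) z' = b i :=
          (hmemJ z' i).mp (hsub (Finset.mem_insert_of_mem hiJ))
        exact ih z' hz'P i hiz' hbi (by omega)
  -- consequence: all constraints are nonpositive on P
  have hle0 : ∀ x ∈ P, ∀ i, dotR (c i) x ≤ 0 := by
    intro x hx i
    by_contra hpos
    push_neg at hpos
    set S : Finset (Fin n) := Finset.univ.filter (fun j => 0 < dotR (c j) x) with hS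
    have hSne : S.Nonempty := ⟨i, by simp [hS, hpos]⟩
    obtain ⟨m, hmS, hmin⟩ :=
      Finset.exists_min_image S (fun j => b j / dotR (c j) x) hSne
    have hSv : ∀ j ∈ S, 0 < dotR (c j) x := by
      intro j hj; exact (Finset.mem_filter.mp hj).2
    have hmx : 0 < dotR (c m) x := hSv m hmS
    have hxP := hx; rw [hPeq] at hxP
    have hbm : 0 < b m := lt_of_lt_of_le hmx (hxP m)
    set L : ℝ := b m / dotR (c m) x with hLdef
    have hL : 0 < L := div_pos hbm hmx
    set z := L • x with hzdef
    have hdz : ∀ j, dotR (c j) z = L * dotR (c j) x := by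
      intro j; rw [hzdef, dotR_smul]
    have hzP : z ∈ P := by
      rw [hPeq]
      intro j
      rw [hdz j]
      by_cases hjv : 0 < dotR (c j) x
      · have hjS : j ∈ S := Finset.mem_filter.mpr ⟨Finset.mem_univ _, hjv⟩
        have hmle := hmin j hjS
        calc L * dotR (c j) x ≤ (b j / dotR (c j) x) * dotR (c j) x :=
              mul_le_mul_of_nonneg_right hmle hjv.le
          _ = b j := div_mul_cancel₀ _ (ne_of_gt hjv)
      · push_neg at hjv
        have : L * dotR (c j) x ≤ 0 := mul_nonpos_of_nonneg_of_nonpos hL.le hjv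
        linarith [hb j]
    have hmt : dotR (c m) z = b m := by
      rw [hdz m, hLdef, div_mul_cancel₀ _ (ne_of_gt hmx)]
    exact key n z hzP m hmt hbm (Nat.le_add_left n _)
  -- conclusion
  intro l hl x hx
  rw [hPeq]
  intro i
  rw [dotR_smul]
  have h1 := hle0 x hx i
  have h2 : l * dotR (c i) x ≤ 0 := mul_nonpos_of_nonneg_of_nonpos hl h1
  linarith [hb i]

end
end

section
/- Let S be a multiplicatively closed set of monomials in an affine semigroup ring k[Q], and let NF be the minimal face of Q containing the exponent vectors of elements of S. Then the localization S^{-1} k[Q] is isomorphic to k[Q - NF]. -/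
/-!
Inverting the monomials `X^s`, `s ∈ S`, inverts every `X^f` with `f` in the face `F`: the elements
of `Q` dividing some exponent of `S` form a face, so by minimality each `f ∈ F` satisfies
`f + y = s` for some `y ∈ Q` and some exponent `s` of `S`, and `X^{-f} = X^y / X^s`. Hence every
monomial `X^{q - f}` of `k[Q - F]` is a fraction with denominator in `S`, and since
`k[Q] → k[Q - F]` is injective, this ring satisfies the universal property of `S⁻¹ k[Q]`.
-/

noncomputable section

def IsFace {d : ℕ} (Q F : AddSubmonoid (Fin d → ℤ)) : Prop :=
  F ≤ Q ∧ ∀ a b : Fin d → ℤ, a ∈ Q → b ∈ Q → (a + b ∈ F ↔ a ∈ F ∧ b ∈ F)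

def locSemigroup {d : ℕ} (Q F : AddSubmonoid (Fin d → ℤ)) : AddSubmonoid (Fin d → ℤ) where
  carrier := {x | ∃ q ∈ Q, ∃ f ∈ F, x = q - f}
  zero_mem' := ⟨0, Q.zero_mem, 0, F.zero_mem, by simp⟩
  add_mem' := by
    rintro a b ⟨q1, hq1, f1, hf1, rfl⟩ ⟨q2, hq2, f2, hf2, rfl⟩
    exact ⟨q1 + q2, Q.add_mem hq1 hq2, f1 + f2, F.add_mem hf1 hf2, by abel⟩

open AddMonoidAlgebra

theorem RingHom.exists_mul_map_eq_map_of_add {R A : Type*} [CommSemiring R] [CommSemiring A]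
    (f : R →+* A) {S : Submonoid R} {z w : A}
    (hz : ∃ x : R × S, z * f x.2 = f x.1) (hw : ∃ x : R × S, w * f x.2 = f x.1) :
    ∃ x : R × S, (z + w) * f x.2 = f x.1 := by
  obtain ⟨⟨a, s⟩, hs⟩ := hz
  obtain ⟨⟨b, t⟩, ht⟩ := hw
  refine ⟨⟨a * t + b * s, s * t⟩, ?_⟩
  simp only [Submonoid.coe_mul, map_add, map_mul, ← hs, ← ht]
  ring

namespace AddMonoidAlgebra

section Semiring

variable {k M : Type*} [Semiring k] [AddMonoid M]

def monomialExponents (S : Submonoid (AddMonoidAlgebra k M)) : AddSubmonoid M where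
  carrier := {m | single m 1 ∈ S}
  zero_mem' := S.one_mem
  add_mem' {a b} ha hb := by
    show single (a + b) 1 ∈ S
    simpa only [single_mul_single, one_mul] using S.mul_mem ha hb

theorem isUnit_single_one {m : M} (hm : IsAddUnit m) : IsUnit (single m (1 : k)) := by
  obtain ⟨u, rfl⟩ := hm
  refine ⟨⟨single (u : M) 1, single ((-u : AddUnits M) : M) 1, ?_, ?_⟩, rfl⟩ <;>
    simp [single_mul_single, one_def]

end Semiring

variable {k M N : Type*} [CommSemiring k] [AddCommMonoid M] [AddCommMonoid N]

theorem isLocalizationMap_mapDomainRingHom {ι : M →+ N} (hι : Function.Injective ι)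
    {S : Submonoid (AddMonoidAlgebra k M)}
    (hunit : ∀ s ∈ S, ∃ m, s = single m 1 ∧ IsAddUnit (ι m))
    (hsurj : ∀ n : N, ∃ m m', single m' (1 : k) ∈ S ∧ n + ι m' = ι m) :
    S.IsLocalizationMap (mapDomainRingHom k ι) where
  map_units := by
    rintro ⟨s, hs⟩
    obtain ⟨m, rfl, hm⟩ := hunit s hs
    simpa [mapDomain_single] using isUnit_single_one (k := k) hm
  surj z := by
    induction z using AddMonoidAlgebra.induction_linear with
    | zero => exact ⟨⟨0, 1⟩, by simp⟩
    | add z w hz hw => exact (mapDomainRingHom k ι).exists_mul_map_eq_map_of_add hz hw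
    | single n c =>
      obtain ⟨m, m', hm', hn⟩ := hsurj n
      refine ⟨⟨single m c, ⟨single m' 1, hm'⟩⟩, ?_⟩
      simp [mapDomain_single, single_mul_single, hn]
  exists_of_eq h := ⟨1, by rw [mapDomain_injective hι h]⟩

end AddMonoidAlgebra

namespace AddSubmonoid

variable {G : Type*} [AddCommMonoid G]

def faceGeneratedBy (Q T : AddSubmonoid G) : AddSubmonoid G where
  carrier := {x | x ∈ Q ∧ ∃ y ∈ Q, x + y ∈ T}
  zero_mem' := ⟨Q.zero_mem, 0, Q.zero_mem, by simp⟩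
  add_mem' := by
    rintro a b ⟨ha, y, hy, hay⟩ ⟨hb, z, hz, hbz⟩
    exact ⟨Q.add_mem ha hb, y + z, Q.add_mem hy hz, by
      simpa only [add_add_add_comm] using T.add_mem hay hbz⟩

theorem le_faceGeneratedBy {Q T : AddSubmonoid G} (hTQ : T ≤ Q) : T ≤ faceGeneratedBy Q T :=
  fun x hx => ⟨hTQ hx, 0, Q.zero_mem, by simp [hx]⟩

theorem isFace_faceGeneratedBy {d : ℕ} (Q T : AddSubmonoid (Fin d → ℤ)) :
    IsFace Q (faceGeneratedBy Q T) := by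
  refine ⟨fun x hx => hx.1, fun a b ha hb => ⟨?_, fun ⟨hFa, hFb⟩ => add_mem hFa hFb⟩⟩
  rintro ⟨-, y, hy, hT⟩
  refine ⟨⟨ha, b + y, Q.add_mem hb hy, ?_⟩, ⟨hb, a + y, Q.add_mem ha hy, ?_⟩⟩
  · rwa [← add_assoc]
  · rwa [add_left_comm, ← add_assoc]

end AddSubmonoid

section locSemigroup

variable {d : ℕ} (Q F : AddSubmonoid (Fin d → ℤ))

theorem le_locSemigroup : Q ≤ locSemigroup Q F :=
  fun x hx => ⟨x, hx, 0, F.zero_mem, (sub_zero x).symm⟩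

theorem neg_mem_locSemigroup {f : Fin d → ℤ} (hf : f ∈ F) : -f ∈ locSemigroup Q F :=
  ⟨0, Q.zero_mem, f, hf, (zero_sub f).symm⟩

end locSemigroup

theorem localization_of_affine_semigroup_ring_at_monomials_general
    {d : ℕ} (k : Type) [Field k]
    (Q : AddSubmonoid (Fin d → ℤ))
    -- S is a multiplicatively closed set of monomials in k[Q]
    (S : Submonoid (AddMonoidAlgebra k Q))
    (hSmon : ∀ s ∈ S, ∃ q : Q, s = AddMonoidAlgebra.single q (1 : k))
    -- ℕF is the minimal face of Q containing the exponent vectors of elements of S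
    (F : AddSubmonoid (Fin d → ℤ))
    (hFcont : ∀ q : Q, (AddMonoidAlgebra.single q (1 : k)) ∈ S → (q : Fin d → ℤ) ∈ F)
    (hFmin : ∀ F' : AddSubmonoid (Fin d → ℤ), IsFace Q F' →
      (∀ q : Q, (AddMonoidAlgebra.single q (1 : k)) ∈ S → (q : Fin d → ℤ) ∈ F') → F ≤ F') :
    Nonempty (Localization S ≃+* AddMonoidAlgebra k (locSemigroup Q F)) := by
  set T := (monomialExponents S).map Q.subtype
  have hTQ : T ≤ Q := AddSubmonoid.map_le_iff_le_comap.mpr fun p _ => p.2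
  have hFT : F ≤ Q.faceGeneratedBy T := hFmin _ (Q.isFace_faceGeneratedBy T) fun q hq =>
    AddSubmonoid.le_faceGeneratedBy hTQ ⟨q, hq, rfl⟩
  set ι := AddSubmonoid.inclusion (le_locSemigroup Q F)
  have hunit : ∀ s ∈ S, ∃ q, s = single q 1 ∧ IsAddUnit (ι q) := fun s hs => by
    obtain ⟨q, rfl⟩ := hSmon s hs
    refine ⟨q, rfl, isAddUnit_iff_exists_neg.mpr ⟨⟨-q, ?_⟩, ?_⟩⟩
    · exact neg_mem_locSemigroup Q F (hFcont q hs)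
    · exact Subtype.ext (add_neg_cancel (q : Fin d → ℤ))
  have hsurj :
      ∀ n : locSemigroup Q F, ∃ m m', single m' (1 : k) ∈ S ∧ n + ι m' = ι m := by
    rintro ⟨_, q, hq, f, hf, rfl⟩
    obtain ⟨-, y, hy, s, hs, hsy⟩ := hFT hf
    refine ⟨⟨q + y, Q.add_mem hq hy⟩, s, hs, Subtype.ext ?_⟩
    change q - f + s = q + y
    rw [show (s : Fin d → ℤ) = f + y from hsy]
    abel
  let := (mapDomainRingHom k ι).toAlgebra
  have : IsLocalization S (AddMonoidAlgebra k (locSemigroup Q F)) :=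
    ⟨isLocalizationMap_mapDomainRingHom (AddSubmonoid.inclusion_injective _) hunit hsurj⟩
  exact ⟨(IsLocalization.algEquiv S (Localization S) _).toRingEquiv⟩

theorem localization_of_affine_semigroup_ring_at_monomials
    {d : ℕ} (k : Type) [Field k] (A : Finset (Fin d → ℤ)) (h0 : (0 : Fin d → ℤ) ∉ A)
    -- the affine semigroup Q = ℕA
    (Q : AddSubmonoid (Fin d → ℤ)) (hQ : Q = AddSubmonoid.closure (A : Set (Fin d → ℤ)))
    -- S is a multiplicatively closed set of monomials in k[Q]
    (S : Submonoid (AddMonoidAlgebra k Q))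
    (hSmon : ∀ s ∈ S, ∃ q : Q, s = AddMonoidAlgebra.single q (1 : k))
    -- ℕF is the minimal face of Q containing the exponent vectors of elements of S
    (F : AddSubmonoid (Fin d → ℤ)) (hF : IsFace Q F)
    (hFcont : ∀ q : Q, (AddMonoidAlgebra.single q (1 : k)) ∈ S → (q : Fin d → ℤ) ∈ F)
    (hFmin : ∀ F' : AddSubmonoid (Fin d → ℤ), IsFace Q F' →
      (∀ q : Q, (AddMonoidAlgebra.single q (1 : k)) ∈ S → (q : Fin d → ℤ) ∈ F') → F ≤ F') :
    Nonempty (Localization S ≃+* AddMonoidAlgebra k (locSemigroup Q F)) :=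
  localization_of_affine_semigroup_ring_at_monomials_general k Q S hSmon F hFcont hFmin

end
end

section
/- The degree set of any finitely generated Z^d-graded module M over an affine semigroup ring k[Q] is a finite union of sets of the form a_i + NF_i, where each F_i is a face of Q and a_i ∈ Z^d. -/
set_option synthInstance.maxHeartbeats 800000
set_option maxHeartbeats 1600000

/-!
STATEMENT 5: The degree set of any finitely generated ℤ^d-graded module M over an
affine semigroup ring k[Q] is a finite union of sets of the form aᵢ + ℕFᵢ, where
each Fᵢ is a face of Q and aᵢ ∈ ℤ^d.
-/

open scoped BigOperators

noncomputable section

/-- The translate `a + ℕF` of the face `F` by `a`. -/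
def transSet {d : ℕ} (a : Fin d → ℤ) (F : AddSubmonoid (Fin d → ℤ)) : Set (Fin d → ℤ) :=
  {x | ∃ f ∈ F, x = a + f}

/-- A proper pair for a degree set `D` relative to the semigroup `Q'`:
a pair `(a, F)` with `F` a face of `Q'` and `a + ℕF ⊆ D`. -/
def IsProperPair {d : ℕ} (Q' : AddSubmonoid (Fin d → ℤ)) (D : Set (Fin d → ℤ))
    (p : (Fin d → ℤ) × AddSubmonoid (Fin d → ℤ)) : Prop :=
  IsFace Q' p.2 ∧ transSet p.1 p.2 ⊆ D

/-- The partial order on proper pairs: `(a,F) ≤ (b,G)` iff `a + ℕF ⊆ b + ℕG`. -/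
def pairLE {d : ℕ} (p q : (Fin d → ℤ) × AddSubmonoid (Fin d → ℤ)) : Prop :=
  transSet p.1 p.2 ⊆ transSet q.1 q.2

/-- A degree pair: a proper pair maximal in the order `pairLE`. -/
def IsDegreePair {d : ℕ} (Q' : AddSubmonoid (Fin d → ℤ)) (D : Set (Fin d → ℤ))
    (p : (Fin d → ℤ) × AddSubmonoid (Fin d → ℤ)) : Prop :=
  IsProperPair Q' D p ∧
    ∀ q, IsProperPair Q' D q → pairLE p q → pairLE q p

/-!
Pick finitely many homogeneous generators `mᵢ`, of degrees `aᵢ`. Over `k`, `M` is spanned by the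
homogeneous elements `x^q mᵢ`, so `deg M` is the union of the sets `aᵢ + (Q \ Sᵢ)`, where
`Sᵢ = {q ∈ Q | x^q mᵢ = 0}` is a monoid ideal of `Q`. The complement of a monoid ideal of `Q` is a
finite union of translates of faces, by Noetherian induction on the ideal (Dickson's lemma): the
complement of a prime ideal is a face, and otherwise the complement splits into translates of the
complements of two larger ideals.
-/

open Pointwise

section MonoidIdeal

variable {G : Type*} [AddCommMonoid G]

def IsMonoidIdeal (Q : AddSubmonoid G) (S : Set G) : Prop :=
  S ⊆ Q ∧ ∀ s ∈ S, ∀ q ∈ Q, s + q ∈ S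

variable {Q : AddSubmonoid G} {S : Set G}

namespace IsMonoidIdeal

theorem union_vadd (hS : IsMonoidIdeal Q S) {a : G} (ha : a ∈ Q) :
    IsMonoidIdeal Q (S ∪ (a +ᵥ (Q : Set G))) := by
  refine ⟨Set.union_subset hS.1 ?_, ?_⟩
  · rintro _ ⟨q, hq, rfl⟩
    exact Q.add_mem ha hq
  · rintro s (hs | ⟨f, hf, rfl⟩) q hq
    · exact Or.inl (hS.2 s hs q hq)
    · exact Or.inr ⟨f + q, Q.add_mem hf hq, (add_assoc a f q).symm⟩

theorem sdiff_eq_empty_of_zero_mem (hS : IsMonoidIdeal Q S) (h0 : 0 ∈ S) :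
    (Q : Set G) \ S = ∅ :=
  Set.sdiff_eq_empty.2 fun q hq => by simpa using hS.2 0 h0 q hq

theorem setOf_add_mem (hS : IsMonoidIdeal Q S) (a : G) :
    IsMonoidIdeal Q {f | f ∈ Q ∧ a + f ∈ S} :=
  ⟨fun _ hf => hf.1, fun _ ⟨hfQ, hfS⟩ q hq =>
    ⟨Q.add_mem hfQ hq, by rw [← add_assoc]; exact hS.2 _ hfS q hq⟩⟩

/-- `S ↦ {u ∈ ℕ^A | ∑ uᵢ aᵢ ∈ S}` embeds the monoid ideals of `Q = ℕA` strictly monotonically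
into the semigroup ideals of `ℕ^A`, which satisfy the ascending chain condition by Dickson's
lemma. -/
theorem wellFoundedOn_ssuperset (hQ : Q.FG) : {S | IsMonoidIdeal Q S}.WellFoundedOn (· ⊃ ·) := by
  obtain ⟨A, rfl⟩ := hQ
  let φ : (A → ℕ) → G := fun u => ∑ i, u i • (i : G)
  have hφ_add (u v : A → ℕ) : φ (u + v) = φ u + φ v := by
    simp only [φ, Pi.add_apply, add_smul, Finset.sum_add_distrib]
  have hφ_mem (u : A → ℕ) : φ u ∈ AddSubmonoid.closure (A : Set G) :=
    AddSubmonoid.mem_closure_finset'.2 ⟨u, rfl⟩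
  let pullback (S : {S | IsMonoidIdeal (AddSubmonoid.closure (A : Set G)) S}) :
      AddSemigroupIdeal (A → ℕ) :=
    { carrier := φ ⁻¹' S
      vadd_mem' := fun v u hu => by
        simpa only [Set.mem_preimage, vadd_eq_add, hφ_add, add_comm (φ v)] using
          S.2.2 _ hu _ (hφ_mem v) }
  refine Subrelation.wf (fun {S S'} hSS' => ?_) (InvImage.wf pullback wellFounded_gt)
  obtain ⟨x, hxS, hxS'⟩ := Set.exists_of_ssubset hSS'
  obtain ⟨u, rfl⟩ := AddSubmonoid.mem_closure_finset'.1 (S.2.1 hxS)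
  exact SetLike.lt_iff_le_and_exists.2 ⟨fun v hv => hSS'.1 hv, u, hxS, hxS'⟩

end IsMonoidIdeal

theorem sdiff_eq_union_vadd_sdiff {a : G} (ha : a ∈ Q) :
    (Q : Set G) \ S = ((Q : Set G) \ (S ∪ (a +ᵥ (Q : Set G)))) ∪
      (a +ᵥ ((Q : Set G) \ {f | f ∈ Q ∧ a + f ∈ S})) := by
  ext x
  constructor
  · rintro ⟨hxQ, hxS⟩
    by_cases hx : x ∈ a +ᵥ (Q : Set G)
    · obtain ⟨f, hf, rfl⟩ := hx
      exact Or.inr ⟨f, ⟨hf, fun h => hxS h.2⟩, rfl⟩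
    · exact Or.inl ⟨hxQ, fun h => h.elim hxS hx⟩
  · rintro (⟨hxQ, hxS⟩ | ⟨f, ⟨hfQ, hfS⟩, rfl⟩)
    · exact ⟨hxQ, fun h => hxS (Or.inl h)⟩
    · exact ⟨Q.add_mem ha hfQ, fun h => hfS ⟨hfQ, h⟩⟩

end MonoidIdeal

section FaceTranslates

variable {d : ℕ}

def IsFiniteUnionOfFaceTranslates (Q : AddSubmonoid (Fin d → ℤ)) (T : Set (Fin d → ℤ)) : Prop :=
  ∃ P : Finset ((Fin d → ℤ) × AddSubmonoid (Fin d → ℤ)),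
    (∀ p ∈ P, IsFace Q p.2) ∧ T = ⋃ p ∈ P, transSet p.1 p.2

theorem vadd_transSet (t a : Fin d → ℤ) (F : AddSubmonoid (Fin d → ℤ)) :
    t +ᵥ transSet a F = transSet (t + a) F := by
  ext x
  simp only [transSet, Set.mem_vadd_set, Set.mem_ofPred_eq, vadd_eq_add]
  constructor
  · rintro ⟨_, ⟨f, hf, rfl⟩, rfl⟩
    exact ⟨f, hf, (add_assoc t a f).symm⟩
  · rintro ⟨f, hf, rfl⟩
    exact ⟨a + f, ⟨f, hf, rfl⟩, (add_assoc t a f).symm⟩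

variable {Q : AddSubmonoid (Fin d → ℤ)} {S T T' : Set (Fin d → ℤ)}

namespace IsFiniteUnionOfFaceTranslates

theorem empty : IsFiniteUnionOfFaceTranslates Q ∅ :=
  ⟨∅, by simp, by simp⟩

theorem of_isFace {F : AddSubmonoid (Fin d → ℤ)} (hF : IsFace Q F) :
    IsFiniteUnionOfFaceTranslates Q F :=
  ⟨{(0, F)}, by simpa using hF, by ext; simp [transSet]⟩

theorem union (h : IsFiniteUnionOfFaceTranslates Q T) (h' : IsFiniteUnionOfFaceTranslates Q T') :
    IsFiniteUnionOfFaceTranslates Q (T ∪ T') := by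
  classical
  obtain ⟨P, hP, rfl⟩ := h
  obtain ⟨P', hP', rfl⟩ := h'
  refine ⟨P ∪ P', fun p hp => ?_, Finset.set_biUnion_union P P' _ |>.symm⟩
  exact (Finset.mem_union.1 hp).elim (hP p) (hP' p)

theorem vadd (h : IsFiniteUnionOfFaceTranslates Q T) (t : Fin d → ℤ) :
    IsFiniteUnionOfFaceTranslates Q (t +ᵥ T) := by
  classical
  obtain ⟨P, hP, rfl⟩ := h
  refine ⟨P.image fun p => (t + p.1, p.2), ?_, ?_⟩
  · simp only [Finset.mem_image]
    rintro _ ⟨p, hp, rfl⟩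
    exact hP p hp
  · simp only [Finset.set_biUnion_finset_image, Set.vadd_set_iUnion₂, vadd_transSet]

theorem biUnion {ι : Type*} (s : Finset ι) {T : ι → Set (Fin d → ℤ)}
    (h : ∀ i ∈ s, IsFiniteUnionOfFaceTranslates Q (T i)) :
    IsFiniteUnionOfFaceTranslates Q (⋃ i ∈ s, T i) := by
  classical
  induction s using Finset.induction_on with
  | empty => simpa using empty
  | insert i s _ ih =>
    rw [Finset.set_biUnion_insert]
    exact (h i (s.mem_insert_self i)).union (ih fun j hj => h j (Finset.mem_insert_of_mem hj))

theorem exists_fin (h : IsFiniteUnionOfFaceTranslates Q T) :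
    ∃ (n : ℕ) (a : Fin n → (Fin d → ℤ)) (Fs : Fin n → AddSubmonoid (Fin d → ℤ)),
      (∀ i, IsFace Q (Fs i)) ∧ T = ⋃ i, transSet (a i) (Fs i) := by
  obtain ⟨P, hP, rfl⟩ := h
  let e := P.equivFin.symm
  refine ⟨P.card, fun i => (e i).1.1, fun i => (e i).1.2, fun i => hP _ (e i).2, ?_⟩
  rw [← Finset.set_biUnion_coe, Set.biUnion_eq_iUnion]
  exact (e.iSup_comp (g := fun p : P => transSet p.1.1 p.1.2)).symm

end IsFiniteUnionOfFaceTranslates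

theorem IsMonoidIdeal.exists_isFace_coe_eq_sdiff (hS : IsMonoidIdeal Q S) (h0 : 0 ∉ S)
    (hprime : ∀ a ∈ Q, ∀ b ∈ Q, a + b ∈ S → a ∈ S ∨ b ∈ S) :
    ∃ F : AddSubmonoid (Fin d → ℤ), IsFace Q F ∧ (F : Set (Fin d → ℤ)) = (Q : Set _) \ S := by
  refine ⟨{ carrier := (Q : Set _) \ S
            zero_mem' := ⟨Q.zero_mem, h0⟩
            add_mem' := fun ⟨haQ, haS⟩ ⟨hbQ, hbS⟩ =>
              ⟨Q.add_mem haQ hbQ, fun hab => (hprime _ haQ _ hbQ hab).elim haS hbS⟩ },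
    ⟨fun x hx => hx.1, fun a b ha hb => ?_⟩, rfl⟩
  change a + b ∈ (Q : Set _) \ S ↔ a ∈ (Q : Set _) \ S ∧ b ∈ (Q : Set _) \ S
  constructor
  · rintro ⟨-, habS⟩
    exact ⟨⟨ha, fun haS => habS (hS.2 a haS b hb)⟩,
      ⟨hb, fun hbS => habS (add_comm b a ▸ hS.2 b hbS a ha)⟩⟩
  · rintro ⟨⟨-, haS⟩, ⟨-, hbS⟩⟩
    exact ⟨Q.add_mem ha hb, fun hab => (hprime a ha b hb hab).elim haS hbS⟩

/-- If `a, b ∈ Q \ S` with `a + b ∈ S`, then `Q \ S` is the union of `Q \ (S ∪ (a + Q))` and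
`a + (Q \ (S - a))`, and both ideals strictly contain `S` (witnessed by `a` and `b`). -/
theorem IsMonoidIdeal.isFiniteUnionOfFaceTranslates_sdiff (hQ : Q.FG) (hS : IsMonoidIdeal Q S) :
    IsFiniteUnionOfFaceTranslates Q ((Q : Set _) \ S) := by
  refine (IsMonoidIdeal.wellFoundedOn_ssuperset hQ).induction hS
    (P := fun S => IsFiniteUnionOfFaceTranslates Q ((Q : Set _) \ S)) fun S hS ih => ?_
  by_cases hprime : ∀ a ∈ Q, ∀ b ∈ Q, a + b ∈ S → a ∈ S ∨ b ∈ S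
  · by_cases h0 : (0 : Fin d → ℤ) ∈ S
    · rw [hS.sdiff_eq_empty_of_zero_mem h0]
      exact .empty
    · obtain ⟨F, hF, hFS⟩ := hS.exists_isFace_coe_eq_sdiff h0 hprime
      exact hFS ▸ .of_isFace hF
  push Not at hprime
  obtain ⟨a, ha, b, hb, habS, haS, hbS⟩ := hprime
  have hS₁ : S ⊂ S ∪ (a +ᵥ (Q : Set _)) :=
    (Set.ssubset_iff_of_subset Set.subset_union_left).2
      ⟨a, Or.inr ⟨0, Q.zero_mem, add_zero a⟩, haS⟩
  have hS₂ : S ⊂ {f | f ∈ Q ∧ a + f ∈ S} := by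
    have hsub : S ⊆ {f | f ∈ Q ∧ a + f ∈ S} := fun s hs =>
      ⟨hS.1 hs, add_comm s a ▸ hS.2 s hs a ha⟩
    exact (Set.ssubset_iff_of_subset hsub).2 ⟨b, ⟨hb, habS⟩, hbS⟩
  rw [sdiff_eq_union_vadd_sdiff ha]
  exact (ih _ (hS.union_vadd ha) hS₁).union ((ih _ (hS.setOf_add_mem a) hS₂).vadd a)

end FaceTranslates

section GradedModule

open DirectSum Submodule

variable {k G M : Type*}

section Decomposition

variable [DecidableEq G] [AddCommMonoid M] [Semiring k] [Module k M]
  (g : G → Submodule k M) [Decomposition g]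

theorem decompose_mem_span_of_mem_span {s : Set M} (hs : ∀ y ∈ s, ∃ w, y ∈ g w) {x : M}
    (hx : x ∈ span k s) (v : G) : (decompose g x v : M) ∈ span k {y | y ∈ s ∧ y ∈ g v} := by
  induction hx using Submodule.span_induction with
  | mem y hy =>
    obtain ⟨w, hyw⟩ := hs y hy
    by_cases hwv : w = v
    · rw [decompose_of_mem_same g (hwv ▸ hyw)]
      exact subset_span ⟨hy, hwv ▸ hyw⟩
    · rw [decompose_of_mem_ne g hyw hwv]
      exact zero_mem _
  | zero => simp
  | add y z _ _ hy hz =>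
    rw [decompose_add, DirectSum.add_apply, Submodule.coe_add]
    exact add_mem hy hz
  | smul c y _ hy =>
    rw [decompose_smul, DirectSum.smul_apply, Submodule.coe_smul]
    exact smul_mem _ c hy

theorem exists_mem_ne_zero_of_mem_span {s : Set M} (hs : ∀ y ∈ s, ∃ w, y ∈ g w) {x : M} {v : G}
    (hx : x ∈ span k s) (hxv : x ∈ g v) (hx0 : x ≠ 0) : ∃ y ∈ s, y ∈ g v ∧ y ≠ 0 := by
  by_contra! h
  have hbot : span k {y | y ∈ s ∧ y ∈ g v} = ⊥ :=
    span_eq_bot.2 fun y hy => h y hy.1 hy.2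
  have := decompose_mem_span_of_mem_span g hs hx v
  rw [decompose_of_mem_same g hxv, hbot, mem_bot] at this
  exact hx0 this

theorem exists_finset_homogeneous_span_eq_top (R : Type*) [Semiring R] [Module R M]
    [Module.Finite R M] :
    ∃ T : Finset (G × M), (∀ p ∈ T, p.2 ∈ g p.1) ∧ span R (Prod.snd '' (T : Set (G × M))) = ⊤ := by
  classical
  obtain ⟨S, hS⟩ := Module.Finite.fg_top (R := R) (M := M)
  refine ⟨S.biUnion fun x => (decompose g x).support.image fun i => (i, (decompose g x i : M)),
    ?_, ?_⟩
  · simp only [Finset.mem_biUnion, Finset.mem_image]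
    rintro _ ⟨x, -, i, -, rfl⟩
    exact (decompose g x i).2
  · rw [eq_top_iff, ← hS, span_le]
    intro x hx
    rw [← sum_support_decompose g x]
    refine sum_mem fun i hi => subset_span ⟨(i, _), ?_, rfl⟩
    simp only [Finset.coe_biUnion, Finset.coe_image, Set.mem_iUnion, Set.mem_image]
    exact ⟨x, hx, i, hi, rfl⟩

end Decomposition

variable [CommSemiring k] [AddCommMonoid G] {Q : AddSubmonoid G}

def monomialExponents (I : Ideal (AddMonoidAlgebra k Q)) : Set G :=
  (↑) '' {q : Q | AddMonoidAlgebra.single q 1 ∈ I}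

theorem isMonoidIdeal_monomialExponents (I : Ideal (AddMonoidAlgebra k Q)) :
    IsMonoidIdeal Q (monomialExponents I) := by
  refine ⟨fun _ ⟨q, _, hq⟩ => hq ▸ q.2, ?_⟩
  rintro _ ⟨q, hqI, rfl⟩ q' hq'
  refine ⟨q + ⟨q', hq'⟩, ?_, rfl⟩
  have : AddMonoidAlgebra.single (q + ⟨q', hq'⟩) (1 : k) =
      AddMonoidAlgebra.single ⟨q', hq'⟩ 1 * AddMonoidAlgebra.single q 1 := by
    rw [AddMonoidAlgebra.single_mul_single, add_comm, one_mul]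
  rw [Set.mem_ofPred_eq, this]
  exact I.mul_mem_left _ hqI

variable [AddCommMonoid M] [Module k M] [Module (AddMonoidAlgebra k Q) M]
  [IsScalarTower k (AddMonoidAlgebra k Q) M]

theorem span_range_single_smul (T : Set M) :
    span k (Set.range (fun q : Q => AddMonoidAlgebra.single q (1 : k)) • T) =
      (span (AddMonoidAlgebra k Q) T).restrictScalars k := by
  refine span_smul_of_span_eq_top ?_ T
  have hbasis : ⇑(AddMonoidAlgebra.basis Q k) = fun q => AddMonoidAlgebra.single q 1 :=
    funext (AddMonoidAlgebra.basis_apply k)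
  exact hbasis ▸ (AddMonoidAlgebra.basis Q k).span_eq

theorem setOf_ne_bot_eq_biUnion [DecidableEq G] (g : G → Submodule k M) [Decomposition g]
    (hg : ∀ (q : Q) (v : G) (m : M), m ∈ g v →
      (AddMonoidAlgebra.single q (1 : k) : AddMonoidAlgebra k Q) • m ∈ g ((q : G) + v))
    (T : Set (G × M)) (hT : ∀ p ∈ T, p.2 ∈ g p.1)
    (hspan : span (AddMonoidAlgebra k Q) (Prod.snd '' T) = ⊤) :
    {v | g v ≠ ⊥} = ⋃ p ∈ T,
      p.1 +ᵥ ((Q : Set G) \ monomialExponents (AddMonoidAlgebra k Q ∙ p.2).annihilator) := by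
  ext v
  simp only [Set.mem_ofPred_eq, Set.mem_iUnion, exists_prop, Set.mem_vadd_set, vadd_eq_add]
  constructor
  · intro hv
    obtain ⟨x, hxv, hx0⟩ := (Submodule.ne_bot_iff _).1 hv
    set monomialMultiples :=
      Set.range (fun q : Q => AddMonoidAlgebra.single q (1 : k)) • (Prod.snd '' T)
    have hx : x ∈ span k monomialMultiples := by
      rw [span_range_single_smul, hspan]
      trivial
    have hhom : ∀ y ∈ monomialMultiples, ∃ w, y ∈ g w := by
      rintro _ ⟨_, ⟨q, rfl⟩, _, ⟨p, hp, rfl⟩, rfl⟩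
      exact ⟨q + p.1, hg q _ _ (hT p hp)⟩
    obtain ⟨_, ⟨_, ⟨q, rfl⟩, _, ⟨p, hp, rfl⟩, rfl⟩, hyv, hy0⟩ :=
      exists_mem_ne_zero_of_mem_span g hhom hx hxv hx0
    refine ⟨p, hp, q, ⟨q.2, ?_⟩, ?_⟩
    · rintro ⟨q', hq', hqq'⟩
      obtain rfl := Subtype.ext hqq'
      exact hy0 (mem_annihilator_span_singleton _ _ |>.1 hq')
    · rw [add_comm, DirectSum.degree_eq_of_mem_mem g (hg q _ _ (hT p hp)) hyv hy0]
  · rintro ⟨p, hp, q, ⟨hqQ, hqS⟩, rfl⟩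
    refine (Submodule.ne_bot_iff _).2 ⟨_, add_comm q p.1 ▸ hg ⟨q, hqQ⟩ _ _ (hT p hp), ?_⟩
    intro h0
    exact hqS ⟨⟨q, hqQ⟩, (mem_annihilator_span_singleton _ _).2 h0, rfl⟩

end GradedModule

theorem degree_set_is_finite_union_of_translates_of_faces_general
    {d : ℕ} (k : Type) [Field k] (A : Finset (Fin d → ℤ))
    -- M a finitely generated ℤ^d-graded module over k[Q], Q = ℕA
    (M : Type) [AddCommGroup M]
    [Module (AddMonoidAlgebra k (AddSubmonoid.closure (A : Set (Fin d → ℤ)))) M]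
    [Module k M]
    [IsScalarTower k (AddMonoidAlgebra k (AddSubmonoid.closure (A : Set (Fin d → ℤ)))) M]
    (g : (Fin d → ℤ) → Submodule k M)
    (hdecomp : DirectSum.IsInternal g)
    (hgsmul : ∀ (q : AddSubmonoid.closure (A : Set (Fin d → ℤ))) (v : Fin d → ℤ) (m : M),
      m ∈ g v →
      (AddMonoidAlgebra.single q (1 : k) :
        AddMonoidAlgebra k (AddSubmonoid.closure (A : Set (Fin d → ℤ)))) • m ∈ g ((q : Fin d → ℤ) + v))
    (hfg : Module.Finite (AddMonoidAlgebra k (AddSubmonoid.closure (A : Set (Fin d → ℤ)))) M) :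
    -- deg(M) is a finite union of translates of faces of Q
    ∃ (n : ℕ) (a : Fin n → (Fin d → ℤ)) (Fs : Fin n → AddSubmonoid (Fin d → ℤ)),
      (∀ i, IsFace (AddSubmonoid.closure (A : Set (Fin d → ℤ))) (Fs i)) ∧
      {v | g v ≠ ⊥} = ⋃ i, transSet (a i) (Fs i) := by
  have := hdecomp.chooseDecomposition
  obtain ⟨T, hT, hspan⟩ := exists_finset_homogeneous_span_eq_top g
    (AddMonoidAlgebra k (AddSubmonoid.closure (A : Set (Fin d → ℤ))))
  refine IsFiniteUnionOfFaceTranslates.exists_fin ?_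
  rw [setOf_ne_bot_eq_biUnion g hgsmul T hT hspan, Finset.set_biUnion_coe]
  refine .biUnion T fun p _ => .vadd ?_ p.1
  exact (isMonoidIdeal_monomialExponents _).isFiniteUnionOfFaceTranslates_sdiff ⟨A, rfl⟩

theorem degree_set_is_finite_union_of_translates_of_faces
    {d : ℕ} (k : Type) [Field k] (A : Finset (Fin d → ℤ)) (h0 : (0 : Fin d → ℤ) ∉ A)
    -- M a finitely generated ℤ^d-graded module over k[Q], Q = ℕA
    (M : Type) [AddCommGroup M]
    [Module (AddMonoidAlgebra k (AddSubmonoid.closure (A : Set (Fin d → ℤ)))) M]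
    [Module k M]
    [IsScalarTower k (AddMonoidAlgebra k (AddSubmonoid.closure (A : Set (Fin d → ℤ)))) M]
    (g : (Fin d → ℤ) → Submodule k M)
    (hdecomp : DirectSum.IsInternal g)
    (hgsmul : ∀ (q : AddSubmonoid.closure (A : Set (Fin d → ℤ))) (v : Fin d → ℤ) (m : M),
      m ∈ g v →
      (AddMonoidAlgebra.single q (1 : k) :
        AddMonoidAlgebra k (AddSubmonoid.closure (A : Set (Fin d → ℤ)))) • m ∈ g ((q : Fin d → ℤ) + v))
    (hfg : Module.Finite (AddMonoidAlgebra k (AddSubmonoid.closure (A : Set (Fin d → ℤ)))) M) :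
    -- deg(M) is a finite union of translates of faces of Q
    ∃ (n : ℕ) (a : Fin n → (Fin d → ℤ)) (Fs : Fin n → AddSubmonoid (Fin d → ℤ)),
      (∀ i, IsFace (AddSubmonoid.closure (A : Set (Fin d → ℤ))) (Fs i)) ∧
      {v | g v ≠ ⊥} = ⋃ i, transSet (a i) (Fs i) :=
  degree_set_is_finite_union_of_translates_of_faces_general k A M g hdecomp hgsmul hfg

end
end

section
/- Let F ⊆ G be faces of Q and M a finitely generated graded k[Q]-module. If (a, G∪(-F)) and (b, G∪(-F)) are overlapping degree pairs of the localization M_F, and a', b' ∈ deg(M) are lifts such that (a',G), (b',G) are degree pairs of M with a' + N(G∪(-F)) = a + N(G∪(-F)) and b' + N(G∪(-F)) = b + N(G∪(-F)), then (a',G) and (b',G) overlap. -/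
set_option synthInstance.maxHeartbeats 800000
set_option maxHeartbeats 1600000

/-!
STATEMENT 10: Let F ⊆ G be faces of Q and M a finitely generated graded
k[Q]-module. If (a, G∪(-F)) and (b, G∪(-F)) are overlapping degree pairs of the
localization M_F, and a', b' ∈ deg(M) are lifts such that (a',G), (b',G) are
degree pairs of M with a' + ℕ(G∪(-F)) = a + ℕ(G∪(-F)) and
b' + ℕ(G∪(-F)) = b + ℕ(G∪(-F)), then (a',G) and (b',G) overlap.
-/

open scoped BigOperators

noncomputable section

variable {d : ℕ} (k : Type) [Field k] (A : Finset (Fin d → ℤ))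

/-- The affine semigroup Q = ℕA. -/
abbrev Qgen : AddSubmonoid (Fin d → ℤ) := AddSubmonoid.closure (A : Set (Fin d → ℤ))

/-- The affine semigroup ring k[Q]. -/
abbrev Rring := AddMonoidAlgebra k (Qgen A)

/-- The multiplicative set of monomials of k[Q] whose exponent vector lies in the
face F; localizing at it gives M_F. -/
def monSub (F : AddSubmonoid (Fin d → ℤ)) : Submonoid (Rring k A) where
  carrier := {r | ∃ q : Qgen A, (q : Fin d → ℤ) ∈ F ∧ r = AddMonoidAlgebra.single q 1}
  one_mem' := ⟨0, F.zero_mem, by simp [AddMonoidAlgebra.one_def]⟩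
  mul_mem' := by
    rintro a b ⟨q1, h1, rfl⟩ ⟨q2, h2, rfl⟩
    exact ⟨q1 + q2, F.add_mem h1 h2,
      by rw [AddMonoidAlgebra.single_mul_single, mul_one]⟩

variable (M : Type) [AddCommGroup M] [Module (Rring k A) M] [Module k M]
  [IsScalarTower k (Rring k A) M] (g : (Fin d → ℤ) → Submodule k M)

/-- The degree set of the localization M_F of the graded module M at the face F:
degrees a such that some homogeneous element m/t^q (with deg m = a + q, q ∈ F)
is nonzero in M_F. -/
def degLoc (F : AddSubmonoid (Fin d → ℤ)) : Set (Fin d → ℤ) :=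
  {a | ∃ (v : Fin d → ℤ) (m : M) (q : Qgen A) (s : monSub k A F),
    m ∈ g v ∧ (q : Fin d → ℤ) ∈ F ∧ v = a + (q : Fin d → ℤ) ∧
    (s : Rring k A) = AddMonoidAlgebra.single q 1 ∧
    LocalizedModule.mk m s ≠ 0}

theorem lifted_degree_pairs_overlap
    (h0 : (0 : Fin d → ℤ) ∉ A)
    (F G : AddSubmonoid (Fin d → ℤ))
    (hF : IsFace (Qgen A) F) (hG : IsFace (Qgen A) G) (hFG : F ≤ G)
    (hdecomp : DirectSum.IsInternal g)
    (hgsmul : ∀ (q : Qgen A) (v : Fin d → ℤ) (m : M), m ∈ g v →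
      (AddMonoidAlgebra.single q (1 : k) : Rring k A) • m ∈ g ((q : Fin d → ℤ) + v))
    (hfg : Module.Finite (Rring k A) M)
    (a b a' b' : Fin d → ℤ)
    -- (a, G∪(-F)) and (b, G∪(-F)) are degree pairs of M_F
    (hpa : IsDegreePair (locSemigroup (Qgen A) F) (degLoc k A M g F) (a, locSemigroup G F))
    (hpb : IsDegreePair (locSemigroup (Qgen A) F) (degLoc k A M g F) (b, locSemigroup G F))
    -- they overlap
    (hover : (transSet a (locSemigroup G F) ∩ transSet b (locSemigroup G F)).Nonempty)
    -- a', b' are lifts as provided by the lifting lemma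
    (ha'deg : a' ∈ {v | g v ≠ ⊥}) (hb'deg : b' ∈ {v | g v ≠ ⊥})
    (ha'pair : IsDegreePair (Qgen A) {v | g v ≠ ⊥} (a', G))
    (hb'pair : IsDegreePair (Qgen A) {v | g v ≠ ⊥} (b', G))
    (ha' : transSet a' (locSemigroup G F) = transSet a (locSemigroup G F))
    (hb' : transSet b' (locSemigroup G F) = transSet b (locSemigroup G F)) :
    -- then (a', G) and (b', G) overlap
    (transSet a' G ∩ transSet b' G).Nonempty := by
  obtain ⟨x, ⟨h1, hh1, hx1⟩, ⟨h2, hh2, hx2⟩⟩ := hover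
  have haa : a ∈ transSet a' (locSemigroup G F) := by
    rw [ha']; exact ⟨0, (locSemigroup G F).zero_mem, by simp⟩
  have hbb : b ∈ transSet b' (locSemigroup G F) := by
    rw [hb']; exact ⟨0, (locSemigroup G F).zero_mem, by simp⟩
  obtain ⟨c1, hc1, hac⟩ := haa
  obtain ⟨c2, hc2, hbc⟩ := hbb
  obtain ⟨g1, hg1, f1, hf1, rfl⟩ := hc1
  obtain ⟨g2, hg2, f2, hf2, rfl⟩ := hc2
  obtain ⟨g3, hg3, f3, hf3, rfl⟩ := hh1
  obtain ⟨g4, hg4, f4, hf4, rfl⟩ := hh2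
  refine ⟨x + (f1 + f3) + (f2 + f4), ⟨g1 + g3 + (f2 + f4), ?_, ?_⟩,
    ⟨g2 + g4 + (f1 + f3), ?_, ?_⟩⟩
  · exact G.add_mem (G.add_mem hg1 hg3) (G.add_mem (hFG hf2) (hFG hf4))
  · subst hx1; subst hac; abel
  · exact G.add_mem (G.add_mem hg2 hg4) (G.add_mem (hFG hf1) (hFG hf3))
  · subst hx2; subst hbc; abel

end
end
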